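/- Let I be a symmetric positive definite k×k real matrix, Ṡ a d×k real matrix of full rank d with d < k, and L a k×(k−d) real matrix whose columns form a basis of the kernel of Ṡ (equivalently, of the orthogonal complement of the row space of Ṡ). Then L (Lᵀ I L)⁻¹ Lᵀ = I⁻¹ − I⁻¹ Ṡᵀ (Ṡ I⁻¹ Ṡᵀ)⁻¹ Ṡ I⁻¹. -/

import Mathlib

/-!
`P = L (Lᵀ I L)⁻¹ Lᵀ I` fixes `range L = ker S` and kills `range (I⁻¹ Sᵀ)` (because `S L = 0`),
while `Q = I⁻¹ Sᵀ (S I⁻¹ Sᵀ)⁻¹ S` satisfies `S Q = S`, so `1 - Q` maps into `ker S = range L`.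
Hence `P = 1 - Q`, and multiplying on the right by `I⁻¹` gives the identity. The matrices
`Lᵀ I L` and `S I⁻¹ Sᵀ` are invertible since they are positive definite, `L` and `Sᵀ` being
injective.
-/

open Matrix

namespace Matrix

variable {R : Type*} {m n p : Type*}

theorem linearIndependent_row_of_rank_eq_card [Field R] [Fintype m] [Fintype n]
    {M : Matrix m n R} (h : M.rank = Fintype.card m) : LinearIndependent R M.row :=
  linearIndependent_iff_card_eq_finrank_span.2 (h ▸ M.rank_eq_finrank_span_row)

section CommRing

variable [CommRing R] [Fintype n] [Fintype p]

theorem mul_eq_zero_of_range_mulVec_subset [Fintype m] {S : Matrix m n R} {L : Matrix n p R}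
    (h : Set.range L.mulVec ⊆ {v | S *ᵥ v = 0}) : S * L = 0 :=
  ext_iff_mulVec.2 fun v => by simpa [← mulVec_mulVec] using h ⟨v, rfl⟩

theorem eq_one_sub_of_mul_eq_self_of_mul_eq_zero [DecidableEq n] {P Q : Matrix n n R}
    {L : Matrix n p R} (hPL : P * L = L) (hPQ : P * Q = 0)
    (hQ : ∀ v, v - Q *ᵥ v ∈ Set.range L.mulVec) : P = 1 - Q := by
  refine ext_iff_mulVec.2 fun v => ?_
  obtain ⟨a, ha⟩ := hQ v
  calc P *ᵥ v = P *ᵥ (v - Q *ᵥ v) + P *ᵥ (Q *ᵥ v) := by rw [← mulVec_add, sub_add_cancel]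
    _ = v - Q *ᵥ v := by rw [← ha, mulVec_mulVec, mulVec_mulVec, hPL, hPQ, zero_mulVec, add_zero]
    _ = (1 - Q) *ᵥ v := by rw [sub_mulVec, one_mulVec]

theorem mul_inv_mul_transpose_eq_inv_sub [Fintype m] [DecidableEq m] [DecidableEq n]
    [DecidableEq p] {I : Matrix n n R} {S : Matrix m n R} {L : Matrix n p R}
    (hI : IsUnit I.det) (hA : IsUnit (Lᵀ * I * L).det) (hB : IsUnit (S * I⁻¹ * Sᵀ).det)
    (hLS : Set.range L.mulVec = {v | S *ᵥ v = 0}) :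
    L * (Lᵀ * I * L)⁻¹ * Lᵀ = I⁻¹ - I⁻¹ * Sᵀ * (S * I⁻¹ * Sᵀ)⁻¹ * S * I⁻¹ := by
  have hSL : S * L = 0 := mul_eq_zero_of_range_mulVec_subset hLS.le
  set A := Lᵀ * I * L
  set B := S * I⁻¹ * Sᵀ
  have hP : L * A⁻¹ * Lᵀ * I = 1 - I⁻¹ * Sᵀ * B⁻¹ * S := by
    refine eq_one_sub_of_mul_eq_self_of_mul_eq_zero (L := L) ?_ ?_ fun v => ?_
    · simp only [Matrix.mul_assoc]
      rw [← Matrix.mul_assoc Lᵀ I L, nonsing_inv_mul _ hA, Matrix.mul_one]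
    · simp only [Matrix.mul_assoc]
      rw [mul_nonsing_inv_cancel_left _ _ hI, ← Matrix.mul_assoc Lᵀ Sᵀ, ← transpose_mul, hSL,
        transpose_zero, Matrix.zero_mul, Matrix.mul_zero, Matrix.mul_zero]
    · rw [hLS, Set.mem_ofPred_eq, mulVec_sub, mulVec_mulVec]
      simp only [← Matrix.mul_assoc]
      rw [mul_nonsing_inv _ hB, Matrix.one_mul, sub_self]
  calc L * A⁻¹ * Lᵀ = L * A⁻¹ * Lᵀ * I * I⁻¹ := by
        rw [mul_nonsing_inv_cancel_right _ _ hI]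
    _ = _ := by rw [hP, Matrix.sub_mul, Matrix.one_mul]

end CommRing

end Matrix

theorem constrained_bound_two_forms_general
    {k d : ℕ}
    (I : Matrix (Fin k) (Fin k) ℝ) (hI : I.PosDef)
    (S : Matrix (Fin d) (Fin k) ℝ) (hSrank : S.rank = d)
    (L : Matrix (Fin k) (Fin (k - d)) ℝ)
    (hLinj : Function.Injective L.mulVec)
    (hLker : Set.range L.mulVec = {v | S.mulVec v = 0}) :
    L * (Lᵀ * I * L)⁻¹ * Lᵀ
      = I⁻¹ - I⁻¹ * Sᵀ * (S * I⁻¹ * Sᵀ)⁻¹ * S * I⁻¹ := by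
  have hA : (Lᵀ * I * L).PosDef := by
    simpa using hI.conjTranspose_mul_mul_same hLinj
  have hB : (S * I⁻¹ * Sᵀ).PosDef := by
    have hrows : LinearIndependent ℝ S.row :=
      linearIndependent_row_of_rank_eq_card (by rw [hSrank, Fintype.card_fin])
    simpa using hI.inv.mul_mul_conjTranspose_same (vecMul_injective_iff.2 hrows)
  exact mul_inv_mul_transpose_eq_inv_sub ((isUnit_iff_isUnit_det _).1 hI.isUnit)
    ((isUnit_iff_isUnit_det _).1 hA.isUnit) ((isUnit_iff_isUnit_det _).1 hB.isUnit) hLker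

/-- If `I` is symmetric positive definite, `Ṡ` is `d×k` of full rank `d < k`, and the
columns of `L` form a basis of the kernel of `Ṡ`, then
`L (Lᵀ I L)⁻¹ Lᵀ = I⁻¹ − I⁻¹ Ṡᵀ (Ṡ I⁻¹ Ṡᵀ)⁻¹ Ṡ I⁻¹`. -/
theorem constrained_bound_two_forms
    {k d : ℕ} (hdk : d < k)
    (I : Matrix (Fin k) (Fin k) ℝ) (hI : I.PosDef)
    (S : Matrix (Fin d) (Fin k) ℝ) (hSrank : S.rank = d)
    (L : Matrix (Fin k) (Fin (k - d)) ℝ)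
    (hLinj : Function.Injective L.mulVec)
    (hLker : Set.range L.mulVec = {v | S.mulVec v = 0}) :
    L * (Lᵀ * I * L)⁻¹ * Lᵀ
      = I⁻¹ - I⁻¹ * Sᵀ * (S * I⁻¹ * Sᵀ)⁻¹ * S * I⁻¹ :=
  constrained_bound_two_forms_general I hI S hSrank L hLinj hLker
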